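/- Let n ≥ 1, let w_0 ∈ S_n be the longest permutation (i ↦ n+1−i), and let v ∈ S_n. For every polynomial f ∈ ℚ[x_1,…,x_n], one has ∂_{w_0 v w_0}(w_0·f) = (−1)^{ℓ(v)} · w_0·(∂_v f), where w_0·g denotes the polynomial g with variables permuted by w_0. Equivalently, conjugating the operator (−1)^{ℓ(v)}∂_v by the action of w_0 yields ∂_{w_0 v w_0}. -/

import Mathlib

open MvPolynomial
open scoped Classical

/-- The Coxeter length of a permutation of `Fin n`, i.e. its number of inversions. -/
def permLen {n : ℕ} (w : Equiv.Perm (Fin n)) : ℕ :=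
  (Finset.univ.filter (fun p : Fin n × Fin n => p.1 < p.2 ∧ w p.2 < w p.1)).card

/-- The adjacent transposition `s_i` exchanging the `i`-th and `(i+1)`-th letters
(zero-indexed); junk value `1` if out of range. -/
def adjSwap (n : ℕ) (i : ℕ) : Equiv.Perm (Fin n) :=
  if h : i + 1 < n then Equiv.swap ⟨i, Nat.lt_of_succ_lt h⟩ ⟨i + 1, h⟩ else 1

/-- The longest element `w₀` of the symmetric group on `Fin n`, `i ↦ n - 1 - i`
(one-indexed: `i ↦ n + 1 - i`). -/
def w0 (n : ℕ) : Equiv.Perm (Fin n) := Fin.revPerm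

/-- The Demazure (divided difference) operator with respect to a pair of variables `i j`:
`f ↦ (f - swap(i,j)·f) / (Xᵢ - Xⱼ)`.  The difference is always divisible by `Xᵢ - Xⱼ`
(for `i ≠ j`), and the quotient is unique since the polynomial ring is a domain, so the
definition by choice below produces exactly this quotient. -/
noncomputable def demazure {σ : Type} [DecidableEq σ] (i j : σ)
    (f : MvPolynomial σ ℚ) : MvPolynomial σ ℚ :=
  if h : ∃ g, f - rename (Equiv.swap i j) f = (X i - X j) * g then h.choose else 0

/-- The Demazure operator `∂ᵢ` on `ℚ[x₀, …, x_{n-1}]` (zero-indexed). -/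
noncomputable def demAt (n : ℕ) (i : ℕ) :
    MvPolynomial (Fin n) ℚ → MvPolynomial (Fin n) ℚ :=
  if h : i + 1 < n then demazure ⟨i, Nat.lt_of_succ_lt h⟩ ⟨i + 1, h⟩ else fun _ => 0

/-- The composite Demazure operator `∂_{i₁} ∘ ⋯ ∘ ∂_{i_r}` along a word `l = [i₁, …, i_r]`. -/
noncomputable def demWord (n : ℕ) (l : List ℕ) :
    MvPolynomial (Fin n) ℚ → MvPolynomial (Fin n) ℚ :=
  l.foldr (fun i op => demAt n i ∘ op) id

/-- `l = [i₁, …, i_r]` is a reduced word for `w` if all letters are in range,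
`s_{i₁} ⋯ s_{i_r} = w`, and `r = ℓ(w)` is the number of inversions of `w`. -/
def IsReducedWord (n : ℕ) (w : Equiv.Perm (Fin n)) (l : List ℕ) : Prop :=
  (∀ i ∈ l, i + 1 < n) ∧ (l.map (adjSwap n)).prod = w ∧ l.length = permLen w

/-- The Demazure operator `∂_w`, defined along a chosen reduced word of `w`
(the result is independent of this choice). -/
noncomputable def demazureOf (n : ℕ) (w : Equiv.Perm (Fin n)) :
    MvPolynomial (Fin n) ℚ → MvPolynomial (Fin n) ℚ :=
  if h : ∃ l, IsReducedWord n w l then demWord n h.choose else fun _ => 0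

/-- The Demazure operator `∂ᵢˣ` acting on the `x`-variables (the left summand) of
`ℚ[x₁, …, xₙ, t₁, …, tₙ]`. -/
noncomputable def demAtX (n : ℕ) (i : ℕ) :
    MvPolynomial (Fin n ⊕ Fin n) ℚ → MvPolynomial (Fin n ⊕ Fin n) ℚ :=
  if h : i + 1 < n then
    demazure (Sum.inl ⟨i, Nat.lt_of_succ_lt h⟩) (Sum.inl ⟨i + 1, h⟩) else fun _ => 0

/-- Composite of `x`-variable Demazure operators along a word. -/
noncomputable def demWordX (n : ℕ) (l : List ℕ) :
    MvPolynomial (Fin n ⊕ Fin n) ℚ → MvPolynomial (Fin n ⊕ Fin n) ℚ :=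
  l.foldr (fun i op => demAtX n i ∘ op) id

/-- The Demazure operator `∂_wˣ` in the `x`-variables, along a chosen reduced word of `w`. -/
noncomputable def demazureOfX (n : ℕ) (w : Equiv.Perm (Fin n)) :
    MvPolynomial (Fin n ⊕ Fin n) ℚ → MvPolynomial (Fin n ⊕ Fin n) ℚ :=
  if h : ∃ l, IsReducedWord n w l then demWordX n h.choose else fun _ => 0

/-- The top product `∏_{i + j ≤ n} (xᵢ - tⱼ)` (one-indexed), i.e. the double Schubert
polynomial of the longest element. -/
noncomputable def schubProd (n : ℕ) : MvPolynomial (Fin n ⊕ Fin n) ℚ :=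
  ∏ p ∈ Finset.univ.filter (fun p : Fin n × Fin n => (p.1 : ℕ) + (p.2 : ℕ) + 2 ≤ n),
    (X (Sum.inl p.1) - X (Sum.inr p.2))

/-- The double Schubert polynomial `𝔖_w(x, t) = ∂ˣ_{w⁻¹w₀} (∏_{i+j≤n} (xᵢ - tⱼ))`. -/
noncomputable def schubert (n : ℕ) (w : Equiv.Perm (Fin n)) :
    MvPolynomial (Fin n ⊕ Fin n) ℚ :=
  demazureOfX n (w⁻¹ * w0 n) (schubProd n)

/-! Conjugation by `w₀` sends `sᵢ` to `s_{n-2-i}` and the variable pair `(i, i+1)` to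
`(n-1-i, n-2-i)`; as a divided difference is antisymmetric in its pair of variables,
`w₀ ∘ ∂ᵢ ∘ w₀ = -∂_{n-2-i}`. Replacing each letter `i` of a reduced word of `v` by `n-2-i`
gives a reduced word of `w₀vw₀`, and each of its `ℓ(v)` letters contributes one sign.

The real content is that `∂_w` does not depend on the reduced word chosen for it. This is
Matsumoto's argument, by induction on `ℓ(w)`: if two reduced words of `w` begin with letters
`i < j`, both are left descents of `w`, so `w` also has reduced words `i j u` and `j i u`
(when `j > i + 1`), or `i j i u` and `j i j u` (when `j = i + 1`), for some word `u`; the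
commutation and braid relations for divided differences identify the two composites. -/

section Transposition

variable {σ : Type} [DecidableEq σ]

lemma swap_mul_swap_eq_swap_mul_swap {a b c : σ} (hab : a ≠ b) (hbc : b ≠ c) :
    Equiv.swap a c * Equiv.swap a b = Equiv.swap b c * Equiv.swap a c := by
  rw [Equiv.swap_comm b c, ← Equiv.swap_mul_swap_mul_swap hab.symm hbc, Equiv.swap_comm b a,
    mul_assoc, Equiv.swap_mul_self, mul_one]

lemma swap_mul_swap_mul_swap_braid {a b c : σ} (hab : a ≠ b) (hac : a ≠ c) (hbc : b ≠ c) :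
    Equiv.swap a b * Equiv.swap b c * Equiv.swap a b =
      Equiv.swap b c * Equiv.swap a b * Equiv.swap b c := by
  rw [Equiv.swap_mul_swap_mul_swap hab hac, Equiv.swap_comm a b, Equiv.swap_comm b c,
    Equiv.swap_mul_swap_mul_swap hbc.symm hac.symm, Equiv.swap_comm]

end Transposition

section DividedDifference

variable {σ τ : Type}

lemma X_sub_X_ne_zero {i j : σ} (hij : i ≠ j) : (X i - X j : MvPolynomial σ ℚ) ≠ 0 :=
  sub_ne_zero.mpr (X_injective.ne hij)

lemma rename_rename_eq_of_mul_eq {p q r s : Equiv.Perm σ} (h : p * q = r * s)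
    (f : MvPolynomial σ ℚ) : rename p (rename q f) = rename r (rename s f) := by
  rw [rename_rename, rename_rename, ← Equiv.Perm.coe_mul, ← Equiv.Perm.coe_mul, h]

variable [DecidableEq σ] [DecidableEq τ]

lemma exists_sub_rename_swap_eq_mul (i j : σ) (f : MvPolynomial σ ℚ) :
    ∃ g, f - rename (Equiv.swap i j) f = (X i - X j) * g := by
  induction f using MvPolynomial.induction_on with
  | C a => exact ⟨0, by simp⟩
  | add p q hp hq =>
    obtain ⟨g, hg⟩ := hp
    obtain ⟨g', hg'⟩ := hq
    exact ⟨g + g', by rw [map_add]; linear_combination hg + hg'⟩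
  | mul_X p k hp =>
    obtain ⟨g, hg⟩ := hp
    rw [map_mul, rename_X]
    by_cases hki : k = i
    · subst hki
      refine ⟨g * X k + rename (Equiv.swap k j) p, ?_⟩
      rw [Equiv.swap_apply_left]
      linear_combination (X k : MvPolynomial σ ℚ) * hg
    by_cases hkj : k = j
    · subst hkj
      refine ⟨g * X k - rename (Equiv.swap i k) p, ?_⟩
      rw [Equiv.swap_apply_right]
      linear_combination (X k : MvPolynomial σ ℚ) * hg
    · refine ⟨g * X k, ?_⟩
      rw [Equiv.swap_apply_of_ne_of_ne hki hkj]
      linear_combination (X k : MvPolynomial σ ℚ) * hg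

lemma X_sub_X_mul_demazure (i j : σ) (f : MvPolynomial σ ℚ) :
    (X i - X j) * demazure i j f = f - rename (Equiv.swap i j) f := by
  rw [demazure, dif_pos (exists_sub_rename_swap_eq_mul i j f)]
  exact (exists_sub_rename_swap_eq_mul i j f).choose_spec.symm

lemma demazure_eq_of_X_sub_X_mul_eq {i j : σ} (hij : i ≠ j) {f g : MvPolynomial σ ℚ}
    (h : (X i - X j) * g = f - rename (Equiv.swap i j) f) : demazure i j f = g :=
  mul_left_cancel₀ (X_sub_X_ne_zero hij) (by rw [X_sub_X_mul_demazure, h])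

lemma rename_demazure (e : σ ≃ τ) {i j : σ} (hij : i ≠ j) (f : MvPolynomial σ ℚ) :
    rename e (demazure i j f) = demazure (e i) (e j) (rename e f) := by
  refine (demazure_eq_of_X_sub_X_mul_eq (e.injective.ne hij) ?_).symm
  have hswap : ⇑(Equiv.swap (e i) (e j)) ∘ ⇑e = ⇑e ∘ ⇑(Equiv.swap i j) := by
    funext x
    rw [Function.comp_apply, ← Equiv.symm_trans_swap_trans, Equiv.trans_apply,
      Equiv.trans_apply, Equiv.symm_apply_apply, Function.comp_apply]
  rw [← rename_X (R := ℚ) e i, ← rename_X (R := ℚ) e j, ← map_sub, ← map_mul,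
    X_sub_X_mul_demazure, map_sub, rename_rename, rename_rename, hswap]

lemma rename_swap_demazure {i j : σ} (hij : i ≠ j) (f : MvPolynomial σ ℚ) :
    rename (Equiv.swap i j) (demazure i j f) = demazure i j f := by
  refine (demazure_eq_of_X_sub_X_mul_eq hij ?_).symm
  have h := congrArg (rename (Equiv.swap i j)) (X_sub_X_mul_demazure i j f)
  rw [map_mul, map_sub, map_sub, rename_X, rename_X, rename_rename, Equiv.swap_apply_left,
    Equiv.swap_apply_right, Function.Involutive.comp_self (Equiv.swap_apply_self i j),
    rename_id_apply] at h
  linear_combination -h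

lemma demazure_smul {i j : σ} (hij : i ≠ j) (c : ℚ) (f : MvPolynomial σ ℚ) :
    demazure i j (c • f) = c • demazure i j f :=
  demazure_eq_of_X_sub_X_mul_eq hij (by
    rw [map_smul, mul_smul_comm, X_sub_X_mul_demazure, smul_sub])

lemma demazure_neg {i j : σ} (hij : i ≠ j) (f : MvPolynomial σ ℚ) :
    demazure i j (-f) = -demazure i j f := by
  simpa using demazure_smul hij (-1) f

lemma demazure_antisymm {i j : σ} (hij : i ≠ j) (f : MvPolynomial σ ℚ) :
    demazure j i f = -demazure i j f :=
  demazure_eq_of_X_sub_X_mul_eq hij.symm (by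
    rw [Equiv.swap_comm, mul_neg, ← neg_mul, neg_sub, X_sub_X_mul_demazure])

lemma X_sub_X_mul_X_sub_X_mul_demazure_demazure {a b c d : σ} (h : [a, b, c, d].Nodup)
    (f : MvPolynomial σ ℚ) :
    (X a - X b) * (X c - X d) * demazure a b (demazure c d f) =
      f - rename (Equiv.swap a b) f - rename (Equiv.swap c d) f +
        rename (Equiv.swap c d) (rename (Equiv.swap a b) f) := by
  simp only [List.nodup_cons, List.mem_cons, List.not_mem_nil, or_false, not_or] at h
  obtain ⟨⟨hab, hac, had⟩, ⟨hbc, hbd⟩, hcd, -⟩ := h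
  have hA : (X a - X b) * demazure a b (demazure c d f) =
      demazure c d f - demazure c d (rename (Equiv.swap a b) f) := by
    rw [X_sub_X_mul_demazure, rename_demazure _ hcd, Equiv.swap_apply_of_ne_of_ne
      (Ne.symm hac) (Ne.symm hbc), Equiv.swap_apply_of_ne_of_ne (Ne.symm had) (Ne.symm hbd)]
  linear_combination (X c - X d) * hA + X_sub_X_mul_demazure c d f -
    X_sub_X_mul_demazure c d (rename (Equiv.swap a b) f)

lemma demazure_demazure_comm {a b c d : σ} (h : [a, b, c, d].Nodup) (f : MvPolynomial σ ℚ) :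
    demazure a b (demazure c d f) = demazure c d (demazure a b f) := by
  have h' : [c, d, a, b].Nodup :=
    (List.perm_append_comm (l₁ := [a, b]) (l₂ := [c, d])).nodup_iff.mp h
  have hab : a ≠ b := by rintro rfl; simp at h
  have hcd : c ≠ d := by rintro rfl; simp at h
  apply mul_left_cancel₀ (mul_ne_zero (X_sub_X_ne_zero hab) (X_sub_X_ne_zero hcd))
  rw [X_sub_X_mul_X_sub_X_mul_demazure_demazure h, mul_comm (X a - X b),
    X_sub_X_mul_X_sub_X_mul_demazure_demazure h',
    rename_rename_eq_of_mul_eq (Equiv.Perm.disjoint_swap_swap h).commute.eq]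
  ring

/-- The right-hand side is the alternating sum of `π • f` over the permutations `π` of
`{a, b, c}`; it is invariant under `a ↔ c`, which gives the braid relation. -/
lemma X_sub_X_mul_demazure_demazure_demazure {a b c : σ} (hab : a ≠ b) (hac : a ≠ c)
    (hbc : b ≠ c) (f : MvPolynomial σ ℚ) :
    (X a - X b) * (X b - X c) * (X a - X c) * demazure a b (demazure b c (demazure a b f)) =
      f - rename (Equiv.swap a b) f - rename (Equiv.swap b c) f - rename (Equiv.swap a c) f +
        rename (Equiv.swap a c) (rename (Equiv.swap b c) f) +
        rename (Equiv.swap b c) (rename (Equiv.swap a c) f) := by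
  set g := demazure a b f
  have hab_step : (X a - X b) * demazure a b (demazure b c g) =
      demazure b c g - demazure a c g := by
    rw [X_sub_X_mul_demazure, rename_demazure _ hbc, Equiv.swap_apply_right,
      Equiv.swap_apply_of_ne_of_ne (Ne.symm hac) (Ne.symm hbc), rename_swap_demazure hab]
  have hbc_twist : (X a - X c) * rename (Equiv.swap b c) g =
      rename (Equiv.swap b c) f - rename (Equiv.swap a c) (rename (Equiv.swap b c) f) := by
    rw [rename_demazure _ hab, Equiv.swap_apply_of_ne_of_ne hab hac, Equiv.swap_apply_left,
      X_sub_X_mul_demazure]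
  have hac_twist : (X c - X b) * rename (Equiv.swap a c) g =
      rename (Equiv.swap a c) f - rename (Equiv.swap b c) (rename (Equiv.swap a c) f) := by
    rw [rename_demazure _ hab, Equiv.swap_apply_left, Equiv.swap_apply_of_ne_of_ne hab.symm hbc,
      X_sub_X_mul_demazure, Equiv.swap_comm c b]
  linear_combination (X b - X c) * (X a - X c) * hab_step +
    (X a - X c) * X_sub_X_mul_demazure b c g - (X b - X c) * X_sub_X_mul_demazure a c g +
    X_sub_X_mul_demazure a b f - hbc_twist - hac_twist

lemma demazure_braid {a b c : σ} (hab : a ≠ b) (hac : a ≠ c) (hbc : b ≠ c)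
    (f : MvPolynomial σ ℚ) :
    demazure a b (demazure b c (demazure a b f)) =
      demazure b c (demazure a b (demazure b c f)) := by
  have hflip : demazure b c (demazure a b (demazure b c f)) =
      -demazure c b (demazure b a (demazure c b f)) := by
    simp only [demazure_antisymm hab, demazure_antisymm hbc, demazure_neg hab, neg_neg]
  have hcycle := swap_mul_swap_eq_swap_mul_swap hab hbc
  have hcycle' : Equiv.swap a b * Equiv.swap a c = Equiv.swap a c * Equiv.swap b c := by
    simpa only [mul_inv_rev, Equiv.swap_inv] using congrArg (·⁻¹) hcycle
  apply mul_left_cancel₀ (mul_ne_zero (mul_ne_zero (X_sub_X_ne_zero hab) (X_sub_X_ne_zero hbc))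
    (X_sub_X_ne_zero hac))
  have hrev := X_sub_X_mul_demazure_demazure_demazure hbc.symm hac.symm hab.symm f
  rw [Equiv.swap_comm c b, Equiv.swap_comm b a, Equiv.swap_comm c a,
    rename_rename_eq_of_mul_eq hcycle, rename_rename_eq_of_mul_eq hcycle'] at hrev
  rw [X_sub_X_mul_demazure_demazure_demazure hab hac hbc, hflip]
  linear_combination -hrev

end DividedDifference

section AdjacentTransposition

variable {n : ℕ}

lemma adjSwap_of_lt {i : ℕ} (h : i + 1 < n) :
    adjSwap n i = Equiv.swap ⟨i, Nat.lt_of_succ_lt h⟩ ⟨i + 1, h⟩ :=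
  dif_pos h

lemma adjSwap_of_not_lt {i : ℕ} (h : ¬i + 1 < n) : adjSwap n i = 1 :=
  dif_neg h

lemma adjSwap_mul_self (i : ℕ) : adjSwap n i * adjSwap n i = 1 := by
  unfold adjSwap
  split_ifs <;> simp

lemma adjSwap_mul_adjSwap_mul (i : ℕ) (w : Equiv.Perm (Fin n)) :
    adjSwap n i * (adjSwap n i * w) = w := by
  rw [← mul_assoc, adjSwap_mul_self, one_mul]

lemma inv_adjSwap_mul_apply (i : ℕ) (w : Equiv.Perm (Fin n)) (x : Fin n) :
    (adjSwap n i * w)⁻¹ x = w⁻¹ (adjSwap n i x) := by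
  rw [mul_inv_rev, inv_eq_of_mul_eq_one_right (adjSwap_mul_self i), Equiv.Perm.mul_apply]

lemma adjSwap_mk_of_ne {i k : ℕ} (hk : k < n) (h₁ : k ≠ i) (h₂ : k ≠ i + 1) :
    adjSwap n i ⟨k, hk⟩ = ⟨k, hk⟩ := by
  unfold adjSwap
  split_ifs
  · exact Equiv.swap_apply_of_ne_of_ne (Fin.ne_of_val_ne h₁) (Fin.ne_of_val_ne h₂)
  · rfl

lemma adjSwap_apply_left {i : ℕ} (h : i + 1 < n) :
    adjSwap n i ⟨i, Nat.lt_of_succ_lt h⟩ = ⟨i + 1, h⟩ := by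
  rw [adjSwap_of_lt h, Equiv.swap_apply_left]

lemma adjSwap_apply_right {i : ℕ} (h : i + 1 < n) :
    adjSwap n i ⟨i + 1, h⟩ = ⟨i, Nat.lt_of_succ_lt h⟩ := by
  rw [adjSwap_of_lt h, Equiv.swap_apply_right]

lemma swap_lt_swap_iff_of_val_succ_eq {a b x y : Fin n} (hab : (a : ℕ) + 1 = b) :
    Equiv.swap a b y < Equiv.swap a b x ↔
      (x = a ∧ y = b) ∨ (y < x ∧ ¬(x = b ∧ y = a)) := by
  simp only [Equiv.swap_apply_def]
  split_ifs <;> simp only [Fin.lt_def, Fin.ext_iff] at * <;> omega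

lemma permLen_one : permLen (1 : Equiv.Perm (Fin n)) = 0 := by
  rw [permLen, Finset.card_eq_zero, Finset.filter_eq_empty_iff]
  exact fun _ _ h => lt_asymm h.1 h.2

lemma permLen_adjSwap_mul_of_lt {i : ℕ} (h : i + 1 < n) {w : Equiv.Perm (Fin n)}
    (hw : w⁻¹ ⟨i, Nat.lt_of_succ_lt h⟩ < w⁻¹ ⟨i + 1, h⟩) :
    permLen (adjSwap n i * w) = permLen w + 1 := by
  rw [permLen, permLen, adjSwap_of_lt h]
  set a : Fin n := ⟨i, Nat.lt_of_succ_lt h⟩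
  set b : Fin n := ⟨i + 1, h⟩
  have hinversions : Finset.univ.filter (fun p : Fin n × Fin n =>
        p.1 < p.2 ∧ (Equiv.swap a b * w) p.2 < (Equiv.swap a b * w) p.1) =
      insert (w⁻¹ a, w⁻¹ b)
        (Finset.univ.filter fun p : Fin n × Fin n => p.1 < p.2 ∧ w p.2 < w p.1) := by
    ext ⟨p, q⟩
    rw [Finset.mem_insert, Finset.mem_filter, Finset.mem_filter]
    simp only [Finset.mem_univ, true_and, Prod.mk.injEq,
      Equiv.Perm.mul_apply, swap_lt_swap_iff_of_val_succ_eq (a := a) (b := b) rfl,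
      Equiv.Perm.eq_inv_iff_eq]
    constructor
    · rintro ⟨hpq, hpa | ⟨hlt, -⟩⟩
      exacts [Or.inl hpa, Or.inr ⟨hpq, hlt⟩]
    · rintro (⟨hpa, hqb⟩ | ⟨hpq, hlt⟩)
      · rw [← Equiv.Perm.eq_inv_iff_eq.mpr hpa, ← Equiv.Perm.eq_inv_iff_eq.mpr hqb] at hw
        exact ⟨hw, Or.inl ⟨hpa, hqb⟩⟩
      · refine ⟨hpq, Or.inr ⟨hlt, fun ⟨hpb, hqa⟩ => ?_⟩⟩
        rw [Equiv.Perm.eq_inv_iff_eq.mpr hpb, Equiv.Perm.eq_inv_iff_eq.mpr hqa] at hpq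
        exact lt_asymm hpq hw
  rw [hinversions, Finset.card_insert_of_notMem]
  simp only [Finset.mem_filter, Finset.mem_univ, true_and, Equiv.Perm.coe_inv,
    Equiv.apply_symm_apply, not_and]
  exact fun _ => not_lt.mpr (Nat.le_succ i)

lemma permLen_adjSwap_mul_add_one {i : ℕ} (h : i + 1 < n) {w : Equiv.Perm (Fin n)}
    (hw : w⁻¹ ⟨i + 1, h⟩ < w⁻¹ ⟨i, Nat.lt_of_succ_lt h⟩) :
    permLen (adjSwap n i * w) + 1 = permLen w := by
  have hw' : (adjSwap n i * w)⁻¹ ⟨i, Nat.lt_of_succ_lt h⟩ <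
      (adjSwap n i * w)⁻¹ ⟨i + 1, h⟩ := by
    rwa [inv_adjSwap_mul_apply, inv_adjSwap_mul_apply, adjSwap_apply_left, adjSwap_apply_right]
  rw [← permLen_adjSwap_mul_of_lt h hw', adjSwap_mul_adjSwap_mul]

lemma permLen_adjSwap_mul_le (i : ℕ) (w : Equiv.Perm (Fin n)) :
    permLen (adjSwap n i * w) ≤ permLen w + 1 := by
  by_cases h : i + 1 < n
  · rcases lt_or_gt_of_ne (w⁻¹.injective.ne (Fin.ne_of_val_ne (Nat.succ_ne_self i).symm) :
      w⁻¹ ⟨i, Nat.lt_of_succ_lt h⟩ ≠ w⁻¹ ⟨i + 1, h⟩) with hw | hw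
    · exact (permLen_adjSwap_mul_of_lt h hw).le
    · linarith [permLen_adjSwap_mul_add_one h hw]
  · rw [adjSwap_of_not_lt h, one_mul]
    exact Nat.le_succ _

lemma permLen_le_permLen_adjSwap_mul (i : ℕ) (w : Equiv.Perm (Fin n)) :
    permLen w ≤ permLen (adjSwap n i * w) + 1 := by
  simpa only [adjSwap_mul_adjSwap_mul] using permLen_adjSwap_mul_le i (adjSwap n i * w)

lemma inv_lt_of_permLen_adjSwap_mul_lt {i : ℕ} (h : i + 1 < n) {w : Equiv.Perm (Fin n)}
    (hw : permLen (adjSwap n i * w) < permLen w) :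
    w⁻¹ ⟨i + 1, h⟩ < w⁻¹ ⟨i, Nat.lt_of_succ_lt h⟩ := by
  refine lt_of_le_of_ne (not_lt.mp fun hlt => ?_)
    (w⁻¹.injective.ne (Fin.ne_of_val_ne (Nat.succ_ne_self i)))
  linarith [permLen_adjSwap_mul_of_lt h hlt]

lemma permLen_list_prod_le (l : List ℕ) : permLen (l.map (adjSwap n)).prod ≤ l.length := by
  induction l with
  | nil => simp [permLen_one]
  | cons i t ih =>
    rw [List.map_cons, List.prod_cons, List.length_cons]
    exact (permLen_adjSwap_mul_le i _).trans (Nat.succ_le_succ ih)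

lemma exists_inv_lt_of_ne_one {w : Equiv.Perm (Fin n)} (hw : w ≠ 1) :
    ∃ i, ∃ h : i + 1 < n, w⁻¹ ⟨i + 1, h⟩ < w⁻¹ ⟨i, Nat.lt_of_succ_lt h⟩ := by
  by_contra! hmono
  refine hw (inv_eq_one.mp (Equiv.ext (congrFun (StrictMono.eq_id ?_))))
  cases n with
  | zero => exact fun x => x.elim0
  | succ m =>
    refine Fin.strictMono_iff_lt_succ.mpr fun i => lt_of_le_of_ne (hmono i (by omega)) ?_
    exact w⁻¹.injective.ne (Fin.ne_of_val_ne (by simp))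

lemma nodup_adjacent_pairs {i j : ℕ} (hij : i + 1 < j) (hj : j + 1 < n) :
    [(⟨i, by omega⟩ : Fin n), ⟨i + 1, by omega⟩, ⟨j, by omega⟩,
      ⟨j + 1, hj⟩].Nodup := by
  simp only [List.nodup_cons, List.mem_cons, List.not_mem_nil, Fin.ext_iff, or_false, not_or,
    List.nodup_nil, not_false_eq_true, and_true]
  omega

lemma adjSwap_mul_comm {i j : ℕ} (hij : i + 1 < j) :
    adjSwap n i * adjSwap n j = adjSwap n j * adjSwap n i := by
  by_cases hj : j + 1 < n
  · rw [adjSwap_of_lt (by omega : i + 1 < n), adjSwap_of_lt hj]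
    exact (Equiv.Perm.disjoint_swap_swap (nodup_adjacent_pairs hij hj)).commute.eq
  · rw [adjSwap_of_not_lt hj, mul_one, one_mul]

lemma adjSwap_braid {i : ℕ} (h : i + 2 < n) :
    adjSwap n i * adjSwap n (i + 1) * adjSwap n i =
      adjSwap n (i + 1) * adjSwap n i * adjSwap n (i + 1) := by
  rw [adjSwap_of_lt (by omega : i + 1 < n), adjSwap_of_lt h]
  exact swap_mul_swap_mul_swap_braid (Fin.ne_of_val_ne (by simp))
    (Fin.ne_of_val_ne (by simp only [ne_eq]; omega)) (Fin.ne_of_val_ne (by simp))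

end AdjacentTransposition

section ReducedWord

variable {n : ℕ}

lemma isReducedWord_cons_iff {w : Equiv.Perm (Fin n)} {i : ℕ} {t : List ℕ} :
    IsReducedWord n w (i :: t) ↔
      i + 1 < n ∧ IsReducedWord n (adjSwap n i * w) t ∧
        permLen (adjSwap n i * w) + 1 = permLen w := by
  simp only [IsReducedWord, List.mem_cons, forall_eq_or_imp, List.map_cons, List.prod_cons,
    List.length_cons]
  constructor
  · rintro ⟨⟨hi, ht⟩, hprod, hlen⟩
    have hprod' : (t.map (adjSwap n)).prod = adjSwap n i * w := by
      rw [← hprod, adjSwap_mul_adjSwap_mul]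
    have hle := permLen_list_prod_le (n := n) t
    have hle' := permLen_le_permLen_adjSwap_mul i w
    rw [hprod'] at hle
    exact ⟨hi, ⟨ht, hprod', by omega⟩, by omega⟩
  · rintro ⟨hi, ⟨ht, hprod, hlen⟩, hw⟩
    exact ⟨⟨hi, ht⟩, by rw [hprod, adjSwap_mul_adjSwap_mul], by omega⟩

lemma exists_isReducedWord (w : Equiv.Perm (Fin n)) : ∃ l, IsReducedWord n w l := by
  induction h : permLen w using Nat.strong_induction_on generalizing w with
  | _ k ih =>
    by_cases hw : w = 1
    · subst hw
      exact ⟨[], by simp [IsReducedWord, permLen_one]⟩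
    obtain ⟨i, hi, hdesc⟩ := exists_inv_lt_of_ne_one hw
    have hlen := permLen_adjSwap_mul_add_one hi hdesc
    obtain ⟨t, ht⟩ := ih _ (by omega) (adjSwap n i * w) rfl
    exact ⟨i :: t, isReducedWord_cons_iff.mpr ⟨hi, ht, hlen⟩⟩

lemma inv_lt_of_isReducedWord_cons {w : Equiv.Perm (Fin n)} {i : ℕ} {t : List ℕ}
    (hl : IsReducedWord n w (i :: t)) (h : i + 1 < n) :
    w⁻¹ ⟨i + 1, h⟩ < w⁻¹ ⟨i, Nat.lt_of_succ_lt h⟩ :=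
  inv_lt_of_permLen_adjSwap_mul_lt h (by linarith [(isReducedWord_cons_iff.mp hl).2.2])

lemma IsReducedWord.replace_prefix {w : Equiv.Perm (Fin n)} {p q m : List ℕ}
    (hl : IsReducedWord n w (p ++ m)) (hq : ∀ i ∈ q, i + 1 < n)
    (hprod : (q.map (adjSwap n)).prod = (p.map (adjSwap n)).prod) (hlen : q.length = p.length) :
    IsReducedWord n w (q ++ m) := by
  obtain ⟨hletters, hl_prod, hl_len⟩ := hl
  refine ⟨fun i hi => ?_, ?_, ?_⟩
  · rcases List.mem_append.mp hi with hi | hi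
    exacts [hq i hi, hletters i (List.mem_append_right p hi)]
  · rwa [List.map_append, List.prod_append, hprod, ← List.prod_append, ← List.map_append]
  · rwa [List.length_append, hlen, ← List.length_append]

end ReducedWord

section DemazureWord

variable {n : ℕ}

lemma demAt_of_lt {i : ℕ} (h : i + 1 < n) :
    demAt n i = demazure ⟨i, Nat.lt_of_succ_lt h⟩ ⟨i + 1, h⟩ :=
  dif_pos h

lemma demAt_comp_demAt_comm {i j : ℕ} (hij : i + 1 < j) (hj : j + 1 < n) :
    demAt n i ∘ demAt n j = demAt n j ∘ demAt n i := by
  funext f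
  rw [Function.comp_apply, Function.comp_apply, demAt_of_lt (by omega : i + 1 < n), demAt_of_lt hj]
  exact demazure_demazure_comm (nodup_adjacent_pairs hij hj) f

lemma demAt_braid {i : ℕ} (h : i + 2 < n) :
    demAt n i ∘ demAt n (i + 1) ∘ demAt n i =
      demAt n (i + 1) ∘ demAt n i ∘ demAt n (i + 1) := by
  funext f
  simp only [Function.comp_apply, demAt_of_lt (by omega : i + 1 < n), demAt_of_lt h]
  exact demazure_braid (Fin.ne_of_val_ne (by simp)) (Fin.ne_of_val_ne (by simp only [ne_eq]; omega))
    (Fin.ne_of_val_ne (by simp)) f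

lemma demWord_cons (i : ℕ) (l : List ℕ) : demWord n (i :: l) = demAt n i ∘ demWord n l :=
  rfl

lemma demWord_append (l l' : List ℕ) : demWord n (l ++ l') = demWord n l ∘ demWord n l' := by
  induction l with
  | nil => rfl
  | cons i l ih => rw [List.cons_append, demWord_cons, demWord_cons, ih, Function.comp_assoc]

end DemazureWord

section WordIndependence

variable {n : ℕ} {w : Equiv.Perm (Fin n)}

lemma exists_isReducedWord_comm_prefix {i j : ℕ} {t t' : List ℕ}
    (hl : IsReducedWord n w (i :: t)) (hl' : IsReducedWord n w (j :: t')) (hij : i + 1 < j) :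
    ∃ m, IsReducedWord n w (i :: j :: m) := by
  obtain ⟨hi, -, hlen_i⟩ := isReducedWord_cons_iff.mp hl
  obtain ⟨hj, -, -⟩ := isReducedWord_cons_iff.mp hl'
  have hdesc : (adjSwap n i * w)⁻¹ ⟨j + 1, hj⟩ <
      (adjSwap n i * w)⁻¹ ⟨j, Nat.lt_of_succ_lt hj⟩ := by
    rw [inv_adjSwap_mul_apply, inv_adjSwap_mul_apply, adjSwap_mk_of_ne _ (by omega) (by omega),
      adjSwap_mk_of_ne _ (by omega) (by omega)]
    exact inv_lt_of_isReducedWord_cons hl' hj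
  obtain ⟨m, hm⟩ := exists_isReducedWord (adjSwap n j * (adjSwap n i * w))
  exact ⟨m, isReducedWord_cons_iff.mpr ⟨hi, isReducedWord_cons_iff.mpr
    ⟨hj, hm, permLen_adjSwap_mul_add_one hj hdesc⟩, hlen_i⟩⟩

lemma exists_isReducedWord_braid_prefix {i : ℕ} {t t' : List ℕ}
    (hl : IsReducedWord n w (i :: t)) (hl' : IsReducedWord n w ((i + 1) :: t')) :
    ∃ m, IsReducedWord n w (i :: (i + 1) :: i :: m) := by
  obtain ⟨hi, -, hlen₁⟩ := isReducedWord_cons_iff.mp hl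
  obtain ⟨hj, -, -⟩ := isReducedWord_cons_iff.mp hl'
  have hdesc_i := inv_lt_of_isReducedWord_cons hl hi
  have hdesc_j := inv_lt_of_isReducedWord_cons hl' hj
  have hdesc₂ : (adjSwap n i * w)⁻¹ ⟨i + 1 + 1, hj⟩ <
      (adjSwap n i * w)⁻¹ ⟨i + 1, hi⟩ := by
    rw [inv_adjSwap_mul_apply, inv_adjSwap_mul_apply, adjSwap_apply_right,
      adjSwap_mk_of_ne _ (by omega) (by omega)]
    exact hdesc_j.trans hdesc_i
  have hdesc₃ : (adjSwap n (i + 1) * (adjSwap n i * w))⁻¹ ⟨i + 1, hi⟩ <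
      (adjSwap n (i + 1) * (adjSwap n i * w))⁻¹ ⟨i, Nat.lt_of_succ_lt hi⟩ := by
    simp only [inv_adjSwap_mul_apply]
    rw [adjSwap_apply_left hj, adjSwap_mk_of_ne hj (by omega) (by omega),
      adjSwap_mk_of_ne (by omega : i < n) (by omega) (by omega), adjSwap_apply_left]
    exact hdesc_j
  obtain ⟨m, hm⟩ := exists_isReducedWord (adjSwap n i * (adjSwap n (i + 1) * (adjSwap n i * w)))
  exact ⟨m, isReducedWord_cons_iff.mpr ⟨hi, isReducedWord_cons_iff.mpr ⟨hj,
    isReducedWord_cons_iff.mpr ⟨hi, hm, permLen_adjSwap_mul_add_one hi hdesc₃⟩,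
    permLen_adjSwap_mul_add_one hj hdesc₂⟩, hlen₁⟩⟩

lemma exists_common_tail {i j : ℕ} {t t' : List ℕ} (hl : IsReducedWord n w (i :: t))
    (hl' : IsReducedWord n w (j :: t')) :
    ∃ p q m, IsReducedWord n w (i :: (p ++ m)) ∧ IsReducedWord n w (j :: (q ++ m)) ∧
      demWord n (i :: p) = demWord n (j :: q) := by
  wlog hij : i ≤ j generalizing i j t t'
  · obtain ⟨p, q, m, hp, hq, hpq⟩ := this hl' hl (by omega)
    exact ⟨q, p, m, hq, hp, hpq.symm⟩
  rcases hij.eq_or_lt with rfl | hij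
  · exact ⟨[], [], t, hl, hl, rfl⟩
  have hi := (isReducedWord_cons_iff.mp hl).1
  have hj := (isReducedWord_cons_iff.mp hl').1
  rcases (Nat.succ_le_of_lt hij).eq_or_lt with rfl | hij
  · obtain ⟨m, hm⟩ := exists_isReducedWord_braid_prefix hl hl'
    refine ⟨[i + 1, i], [i, i + 1], m, hm, hm.replace_prefix (p := [i, i + 1, i])
      (q := [i + 1, i, i + 1]) (by simp [hi, hj]) ?_ rfl, demAt_braid hj⟩
    simp only [List.map_cons, List.map_nil, List.prod_cons, List.prod_nil, mul_one, ← mul_assoc]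
    exact (adjSwap_braid hj).symm
  · obtain ⟨m, hm⟩ := exists_isReducedWord_comm_prefix hl hl' hij
    refine ⟨[j], [i], m, hm, hm.replace_prefix (p := [i, j]) (q := [j, i]) (by simp [hi, hj]) ?_
      rfl, demAt_comp_demAt_comm hij hj⟩
    simp only [List.map_cons, List.map_nil, List.prod_cons, List.prod_nil, mul_one]
    exact (adjSwap_mul_comm hij).symm

theorem demWord_eq_of_isReducedWord {l l' : List ℕ} (hl : IsReducedWord n w l)
    (hl' : IsReducedWord n w l') : demWord n l = demWord n l' := by
  induction h : permLen w using Nat.strong_induction_on generalizing w l l' with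
  | _ k ih =>
    match l, l', hl, hl' with
    | [], [], _, _ => rfl
    | [], _ :: _, ⟨_, _, hlen⟩, ⟨_, _, hlen'⟩
    | _ :: _, [], ⟨_, _, hlen⟩, ⟨_, _, hlen'⟩ =>
      simp only [List.length_nil, List.length_cons] at hlen hlen'
      omega
    | i :: t, j :: t', hl, hl' =>
      obtain ⟨p, q, m, hp, hq, hpq⟩ := exists_common_tail hl hl'
      have tail_eq {a : ℕ} {s r : List ℕ} (hs : IsReducedWord n w (a :: s))
          (hr : IsReducedWord n w (a :: r)) : demWord n s = demWord n r := by
        obtain ⟨-, hs, hlen⟩ := isReducedWord_cons_iff.mp hs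
        exact ih (permLen (adjSwap n a * w)) (by omega) hs (isReducedWord_cons_iff.mp hr).2.1 rfl
      calc demWord n (i :: t)
          _ = demAt n i ∘ demWord n (p ++ m) := by rw [demWord_cons, tail_eq hl hp]
          _ = demWord n (j :: q) ∘ demWord n m := by rw [← hpq, ← demWord_append]; rfl
          _ = demAt n j ∘ demWord n (q ++ m) := by rw [← demWord_append]; rfl
          _ = demWord n (j :: t') := by rw [demWord_cons, tail_eq hl' hq]

lemma demazureOf_eq_demWord {l : List ℕ}
    (hl : IsReducedWord n w l) : demazureOf n w = demWord n l := by
  rw [demazureOf, dif_pos ⟨l, hl⟩]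
  exact demWord_eq_of_isReducedWord (Exists.choose_spec _) hl

end WordIndependence

section LongestElement

variable {n : ℕ}

lemma w0_mul_self : w0 n * w0 n = 1 := by
  ext x
  simp [w0]

lemma w0_inv : (w0 n)⁻¹ = w0 n :=
  inv_eq_of_mul_eq_one_right w0_mul_self

lemma w0_mul_adjSwap_mul_w0 {i : ℕ} (h : i + 1 < n) :
    w0 n * adjSwap n i * w0 n = adjSwap n (n - 2 - i) := by
  have hconj := Equiv.swap_apply_apply (w0 n) ⟨i, by omega⟩ ⟨i + 1, h⟩
  rw [w0_inv] at hconj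
  rw [adjSwap_of_lt h, adjSwap_of_lt (by omega : n - 2 - i + 1 < n), ← hconj, Equiv.swap_comm]
  congr 1 <;> ext <;> simp only [w0, Fin.revPerm_apply, Fin.val_rev] <;> omega

lemma permLen_w0_mul_mul_w0 (v : Equiv.Perm (Fin n)) : permLen (w0 n * v * w0 n) = permLen v := by
  refine Finset.card_bij' (fun p _ => (p.2.rev, p.1.rev)) (fun p _ => (p.2.rev, p.1.rev))
    ?_ ?_ (fun _ _ => by simp) (fun _ _ => by simp) <;>
  · rintro ⟨p, q⟩ hpq
    simp only [Finset.mem_filter, Finset.mem_univ, true_and, Equiv.Perm.mul_apply, w0,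
      Fin.revPerm_apply, Fin.rev_rev, Fin.rev_lt_rev] at hpq ⊢
    exact hpq

lemma demAt_smul {j : ℕ} (h : j + 1 < n) (c : ℚ) (f : MvPolynomial (Fin n) ℚ) :
    demAt n j (c • f) = c • demAt n j f := by
  rw [demAt_of_lt h]
  exact demazure_smul (Fin.ne_of_val_ne (by simp)) c f

lemma demAt_rename_w0 {i : ℕ} (h : i + 1 < n) (f : MvPolynomial (Fin n) ℚ) :
    demAt n (n - 2 - i) (rename (w0 n) f) = -rename (w0 n) (demAt n i f) := by
  have hne : (⟨n - 2 - i, by omega⟩ : Fin n) ≠ ⟨n - 2 - i + 1, by omega⟩ :=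
    Fin.ne_of_val_ne (by simp)
  have hleft : w0 n ⟨i, by omega⟩ = ⟨n - 2 - i + 1, by omega⟩ := by
    ext
    simp only [w0, Fin.revPerm_apply, Fin.val_rev]
    omega
  have hright : w0 n ⟨i + 1, h⟩ = ⟨n - 2 - i, by omega⟩ := by
    ext
    simp only [w0, Fin.revPerm_apply, Fin.val_rev]
    omega
  rw [demAt_of_lt h, demAt_of_lt (by omega), rename_demazure _ (Fin.ne_of_val_ne (by simp)),
    hleft, hright, demazure_antisymm hne, neg_neg]

lemma demWord_map_rename_w0 (l : List ℕ) (hl : ∀ i ∈ l, i + 1 < n)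
    (f : MvPolynomial (Fin n) ℚ) :
    demWord n (l.map (n - 2 - ·)) (rename (w0 n) f) =
      (-1 : ℚ) ^ l.length • rename (w0 n) (demWord n l f) := by
  induction l with
  | nil => simp [demWord]
  | cons i t ih =>
    have hi := hl i List.mem_cons_self
    rw [List.map_cons, demWord_cons, Function.comp_apply, ih fun j hj => hl j (by simp [hj]),
      demAt_smul (by omega), demAt_rename_w0 hi, demWord_cons, Function.comp_apply,
      List.length_cons, pow_succ, mul_neg_one, neg_smul, smul_neg]

lemma isReducedWord_map_w0 {v : Equiv.Perm (Fin n)} {l : List ℕ} (hl : IsReducedWord n v l) :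
    IsReducedWord n (w0 n * v * w0 n) (l.map (n - 2 - ·)) := by
  obtain ⟨hletters, hprod, hlen⟩ := hl
  have hconj : ∀ x, MulAut.conj (w0 n) x = w0 n * x * w0 n := fun x => by
    rw [MulAut.conj_apply, w0_inv]
  refine ⟨fun j hj => ?_, ?_, by rw [List.length_map, hlen, permLen_w0_mul_mul_w0]⟩
  · obtain ⟨i, hi, rfl⟩ := List.mem_map.mp hj
    have hlt := hletters i hi
    omega
  · rw [← hprod, ← hconj, map_list_prod, List.map_map, List.map_map]
    refine congrArg List.prod (List.map_congr_left fun i hi => ?_)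
    rw [Function.comp_apply, Function.comp_apply, hconj, w0_mul_adjSwap_mul_w0 (hletters i hi)]

end LongestElement

theorem demazure_conj_w0_general (n : ℕ) (v : Equiv.Perm (Fin n))
    (f : MvPolynomial (Fin n) ℚ) :
    demazureOf n (w0 n * v * w0 n) (rename (w0 n) f) =
      ((-1 : ℚ) ^ permLen v) • rename (w0 n) (demazureOf n v f) := by
  obtain ⟨l, hl⟩ := exists_isReducedWord v
  rw [demazureOf_eq_demWord (isReducedWord_map_w0 hl), demazureOf_eq_demWord hl,
    demWord_map_rename_w0 l hl.1 f, hl.2.2]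

/-- Conjugating `(-1)^{ℓ(v)} ∂_v` by the action of the longest element `w₀` gives
`∂_{w₀ v w₀}`: for every `f`, `∂_{w₀ v w₀}(w₀·f) = (-1)^{ℓ(v)} · w₀·(∂_v f)`. -/
theorem demazure_conj_w0 (n : ℕ) (hn : 1 ≤ n) (v : Equiv.Perm (Fin n))
    (f : MvPolynomial (Fin n) ℚ) :
    demazureOf n (w0 n * v * w0 n) (rename (w0 n) f) =
      ((-1 : ℚ) ^ permLen v) • rename (w0 n) (demazureOf n v f) :=
  demazure_conj_w0_general n v f
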